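/- arXiv:1912.02130 — 2 statements merged into one kernel-verified Lean document; each statement's English description precedes it below -/
import Mathlib

section
/- Suppose P is a partial order, M is a set with P ∈ M, Q = P ∩ M (with the induced order), and q* ∈ P is strongly M-generic. Then for every q₀ ≤ q* and every subset D ⊆ Q that is dense in Q and satisfies D ⊆ M, the condition q₀ is compatible (in P) with some element of D. Hence a strongly M-generic condition forces the generic filter to intersect Q in a Q-generic filter over the collection of all dense subsets of Q belonging to M. -/
/-- Two conditions are compatible if they have a common lower bound. -/
def Compat {P : Type*} [PartialOrder P] (p q : P) : Prop := ∃ r, r ≤ p ∧ r ≤ q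

/-- `q` is strongly `M`-generic for `P`, where `M : Set P` stands for `P ∩ M`. -/
def StronglyGeneric {P : Type*} [PartialOrder P] (M : Set P) (q : P) : Prop :=
  ∀ q', q' ≤ q → ∃ π ∈ M, ∀ r ∈ M, r ≤ π → Compat r q'

/-- Let `Q = P ∩ M` with the induced order and let `q*` be strongly `M`-generic. Then
every `q₀ ≤ q*` is compatible in `P` with some element of any `D ⊆ Q` dense in `Q`.
Hence a strongly `M`-generic condition forces the generic filter to intersect `Q` in a
`Q`-generic filter. -/
theorem stronglyGeneric_forces_subforcing_generic {P : Type*} [PartialOrder P]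
    (M : Set P) (qstar : P) (hq : StronglyGeneric M qstar) :
    ∀ q₀, q₀ ≤ qstar → ∀ D : Set P, D ⊆ M → (∀ p ∈ M, ∃ d ∈ D, d ≤ p) →
      ∃ d ∈ D, Compat q₀ d := by
  intro q₀ hle D hDM hdense
  obtain ⟨π, hπM, hπ⟩ := hq q₀ hle
  obtain ⟨d, hdD, hdπ⟩ := hdense π hπM
  obtain ⟨r, hr1, hr2⟩ := hπ d (hDM hdD) hdπ
  exact ⟨d, hdD, r, hr2, hr1⟩
end

section
/- Let P be a partial order and M a set with P ∈ M. Suppose q ∈ P is strongly M-generic, and let A ⊆ P ∩ M be a maximal antichain of the suborder P ∩ M. Then every extension q' of q is compatible in P with some element of A. -/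
/-- If `q` is strongly `M`-generic and `A ⊆ P ∩ M` is a maximal antichain of the
suborder `P ∩ M` (pairwise incompatible in `P ∩ M`, and every condition of `P ∩ M` is
compatible within `P ∩ M` with some member of `A`), then every extension `q'` of `q`
is compatible in `P` with some element of `A`. -/
theorem stronglyGeneric_meets_maximal_antichain {P : Type*} [PartialOrder P]
    (M : Set P) (q : P) (hq : StronglyGeneric M q)
    (A : Set P) (hAM : A ⊆ M)
    (hanti : ∀ a ∈ A, ∀ b ∈ A, a ≠ b → ¬ ∃ r ∈ M, r ≤ a ∧ r ≤ b)
    (hmax : ∀ p ∈ M, ∃ a ∈ A, ∃ r ∈ M, r ≤ p ∧ r ≤ a) :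
    ∀ q', q' ≤ q → ∃ a ∈ A, Compat q' a := by
  intro q' hq'
  obtain ⟨π, hπM, hπ⟩ := hq q' hq'
  obtain ⟨a, haA, r, hrM, hrπ, hra⟩ := hmax π hπM
  obtain ⟨t, htr, htq'⟩ := hπ r hrM hrπ
  exact ⟨a, haA, t, htq', htr.trans hra⟩
end
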